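/- arXiv:0901.0490 — 3 statements merged into one kernel-verified Lean document; each statement's English description precedes it below -/
import Mathlib

section
/- Let (V, m) be an A_∞-algebra over Z/2 with δ = m_1, and choose linear maps i : H*(V) → V, p : V → H*(V), h : V → V satisfying p ∘ i = id and id + i ∘ p = δh + hδ, with i landing in cocycles and p induced by projection of cocycles. Define μ_3(α_1,α_2,α_3) = p( m_3(a_1,a_2,a_3) + m_2(a_1, h m_2(a_2,a_3)) + m_2(h m_2(a_1,a_2), a_3) ), where a_k = i(α_k). If μ_2(α_1,α_2) = 0 = μ_2(α_2,α_3), then the image of μ_3(α_1,α_2,α_3) in H*(V)/(im μ_2(α_1,·) + im μ_2(·,α_3)) equals the Massey triple product {α_1, α_2, α_3}. -/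
/-!
Write `aₖ = i αₖ`. Since `m₂(a₁, a₂)` is a cocycle killed by `p`, the homotopy relation gives
`δ (h m₂(a₁, a₂)) = m₂(a₁, a₂)`, so `x + h m₂(a₁, a₂)` and `y + h m₂(a₂, a₃)` are cocycles. Over
`ℤ/2` the two representatives differ by `m₂(a₁, y + h m₂(a₂, a₃)) + m₂(x + h m₂(a₁, a₂), a₃)`.
Replacing a cocycle `z` by `i (p z)` changes `z` by the coboundary `δ (h z)`, and by the Leibniz
rule `m₂(a, δ c) = δ m₂(a, c)` for a cocycle `a`, so `p` of this difference is
`μ₂(α₁, p (y + h m₂(a₂, a₃))) + μ₂(p (x + h m₂(a₁, a₂)), α₃)`.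
-/

open Finset

section CoreAInfty

variable {V : Type*} {W : Type*}

/-- Additivity in each slot; over `ZMod 2` this is equivalent to multilinearity. -/
def IsMultiadditive [AddCommGroup V] [AddCommGroup W] (m : ∀ k : ℕ, (Fin k → V) → W) : Prop :=
  ∀ (k : ℕ) (f : Fin k → V) (s : Fin k) (x y : V),
    m k (Function.update f s (x + y)) = m k (Function.update f s x) + m k (Function.update f s y)

/-- The segment `v a, v (a+1), …, v (a+k-1)` of a sequence of arguments. -/
def seg (v : ℕ → V) (a : ℕ) (k : ℕ) : Fin k → V := fun t => v (a + (t : ℕ))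

/-- `outer_{i+1+k} ∘ (1^{⊗i} ⊗ inner_j ⊗ 1^{⊗k})` applied to the arguments `v 0, v 1, …`
(only the first `i + j + k` entries of `v` are relevant). -/
def insComp (outer : ∀ k : ℕ, (Fin k → V) → W)
    (inner : ∀ k : ℕ, (Fin k → V) → V) (i j k : ℕ) (v : ℕ → V) : W :=
  outer (i + 1 + k) (fun t =>
    if (t : ℕ) < i then v (t : ℕ)
    else if (t : ℕ) = i then inner j (seg v i j)
    else v ((t : ℕ) + j - 1))

/-- The A_∞ relations: `∑_{i+j+k=l} m_{i+1+k} ∘ (1^{⊗i} ⊗ m_j ⊗ 1^{⊗k}) = 0` for all `l ≥ 1`. -/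
def AInftyRel [AddCommGroup V] [Module (ZMod 2) V] (m : ∀ k : ℕ, (Fin k → V) → V) : Prop :=
  ∀ l : ℕ, 1 ≤ l → ∀ v : ℕ → V,
    (∑ i ∈ Finset.range (l + 1), ∑ j ∈ Finset.range (l + 1), ∑ k ∈ Finset.range (l + 1),
      if 1 ≤ j ∧ i + j + k = l then insComp m m i j k v else 0) = 0

/-- An A_∞-algebra structure on `V` over `ZMod 2` (signs are irrelevant in characteristic 2). -/
def IsAInfty [AddCommGroup V] [Module (ZMod 2) V] (m : ∀ k : ℕ, (Fin k → V) → V) : Prop :=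
  IsMultiadditive m ∧ AInftyRel m

/-- The A_n relations: the A_∞ relations only for `1 ≤ l ≤ n`. -/
def AnRel [AddCommGroup V] [Module (ZMod 2) V] (m : ∀ k : ℕ, (Fin k → V) → V) (n : ℕ) : Prop :=
  ∀ l : ℕ, 1 ≤ l → l ≤ n → ∀ v : ℕ → V,
    (∑ i ∈ Finset.range (l + 1), ∑ j ∈ Finset.range (l + 1), ∑ k ∈ Finset.range (l + 1),
      if 1 ≤ j ∧ i + j + k = l then insComp m m i j k v else 0) = 0

/-- An A_n-algebra structure on `V` over `ZMod 2`. -/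
def IsAn [AddCommGroup V] [Module (ZMod 2) V] (m : ∀ k : ℕ, (Fin k → V) → V) (n : ℕ) : Prop :=
  IsMultiadditive m ∧ AnRel m n

/-- The differential `δ = m_1`. -/
def dl (m : ∀ k : ℕ, (Fin k → V) → W) (v : V) : W := m 1 (fun _ => v)

/-- The binary operation `m_2`. -/
def mu2 (m : ∀ k : ℕ, (Fin k → V) → W) (a b : V) : W := m 2 ![a, b]

/-- The ternary operation `m_3`. -/
def mu3 (m : ∀ k : ℕ, (Fin k → V) → W) (a b c : V) : W := m 3 ![a, b, c]

end CoreAInfty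

namespace IsMultiadditive

variable {V W : Type*} [AddCommGroup V] [AddCommGroup W] {m : ∀ k : ℕ, (Fin k → V) → W}

theorem dl_add (hm : IsMultiadditive m) (a b : V) : dl m (a + b) = dl m a + dl m b := by
  have e : ∀ x : V, Function.update (fun _ : Fin 1 => a) 0 x = fun _ => x := fun x => by
    funext t; fin_cases t; simp
  simpa [dl, e] using hm 1 (fun _ => a) 0 a b

theorem mu2_add_left (hm : IsMultiadditive m) (a b c : V) :
    mu2 m (a + b) c = mu2 m a c + mu2 m b c := by
  have e : ∀ x : V, Function.update ![a, c] 0 x = ![x, c] := fun x => by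
    funext t; fin_cases t <;> simp
  simpa [mu2, e] using hm 2 ![a, c] 0 a b

theorem mu2_add_right (hm : IsMultiadditive m) (a b c : V) :
    mu2 m a (b + c) = mu2 m a b + mu2 m a c := by
  have e : ∀ x : V, Function.update ![a, b] 1 x = ![a, x] := fun x => by
    funext t; fin_cases t <;> simp
  simpa [mu2, e] using hm 2 ![a, b] 1 b c

theorem mu2_zero_left (hm : IsMultiadditive m) (c : V) : mu2 m 0 c = 0 :=
  (AddMonoidHom.mk' (mu2 m · c) (hm.mu2_add_left · · c)).map_zero

theorem mu2_zero_right (hm : IsMultiadditive m) (a : V) : mu2 m a 0 = 0 :=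
  (AddMonoidHom.mk' (mu2 m a) (hm.mu2_add_right a)).map_zero

end IsMultiadditive

namespace AnRel

variable {V : Type*} [AddCommGroup V] [Module (ZMod 2) V] {m : ∀ k : ℕ, (Fin k → V) → V}

theorem dl_mu2 (hr : AnRel m 2) (a b : V) :
    dl m (mu2 m a b) = mu2 m (dl m a) b + mu2 m a (dl m b) := by
  set v : ℕ → V := fun n => if n = 0 then a else b
  have e₁ : insComp m m 0 2 0 v = dl m (mu2 m a b) := by
    unfold insComp dl mu2 seg
    congr 1; funext t; fin_cases t; simp
    congr 1; funext s; fin_cases s <;> simp [v]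
  have e₂ : insComp m m 0 1 1 v = mu2 m (dl m a) b := by
    unfold insComp dl mu2 seg
    congr 1; funext t; fin_cases t <;> simp [v]
  have e₃ : insComp m m 1 1 0 v = mu2 m a (dl m b) := by
    unfold insComp dl mu2 seg
    congr 1; funext t; fin_cases t <;> simp [v]
  -- the terms of the `l = 2` relation are `(i, j, k) = (0, 2, 0), (0, 1, 1), (1, 1, 0)`
  have rel := hr 2 one_le_two le_rfl v
  simp only [Finset.sum_range_succ, Finset.sum_range_zero] at rel
  norm_num [e₁, e₂, e₃] at rel
  refine eq_of_sub_eq_zero ?_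
  rw [ZModModule.sub_eq_add, ← rel]
  abel

theorem dl_mu2_eq_zero (hr : AnRel m 2) (hm : IsMultiadditive m) {a b : V} (ha : dl m a = 0)
    (hb : dl m b = 0) : dl m (mu2 m a b) = 0 := by
  rw [hr.dl_mu2, ha, hb, hm.mu2_zero_left, hm.mu2_zero_right, add_zero]

end AnRel

section HomotopyRetract

variable {V H : Type*} [AddCommGroup V] {m : ∀ k : ℕ, (Fin k → V) → V} {i : H → V} {p : V → H}
  {h : V → V}

theorem add_i_p_eq_dl_h (hhadd : ∀ x y, h (x + y) = h x + h y)
    (hhom : ∀ v : V, v + i (p v) = dl m (h v) + h (dl m v)) {z : V} (hz : dl m z = 0) :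
    z + i (p z) = dl m (h z) := by
  have h0 : h 0 = 0 := (AddMonoidHom.mk' h hhadd).map_zero
  rw [hhom, hz, h0, add_zero]

theorem dl_h_eq_self [AddCommGroup H] (hiadd : ∀ x y, i (x + y) = i x + i y)
    (hhadd : ∀ x y, h (x + y) = h x + h y)
    (hhom : ∀ v : V, v + i (p v) = dl m (h v) + h (dl m v))
    {v : V} (hv : dl m v = 0) (hpv : p v = 0) : dl m (h v) = v := by
  have i0 : i 0 = 0 := (AddMonoidHom.mk' i hiadd).map_zero
  rw [← add_i_p_eq_dl_h hhadd hhom hv, hpv, i0, add_zero]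

variable [AddCommGroup H] [Module (ZMod 2) V] [Module (ZMod 2) H]

theorem p_mu2_right_eq (hm : IsMultiadditive m) (hr : AnRel m 2)
    (hpadd : ∀ x y, p (x + y) = p x + p y) (hhadd : ∀ x y, h (x + y) = h x + h y)
    (hhom : ∀ v : V, v + i (p v) = dl m (h v) + h (dl m v)) (hpb : ∀ u : V, p (dl m u) = 0)
    {a z : V} (ha : dl m a = 0) (hz : dl m z = 0) :
    p (mu2 m a z) = p (mu2 m a (i (p z))) := by
  have hcob : mu2 m a z + mu2 m a (i (p z)) = dl m (mu2 m a (h z)) := by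
    rw [← hm.mu2_add_right, add_i_p_eq_dl_h hhadd hhom hz, hr.dl_mu2, ha, hm.mu2_zero_left,
      zero_add]
  refine eq_of_sub_eq_zero ?_
  rw [ZModModule.sub_eq_add, ← hpadd, hcob, hpb]

theorem p_mu2_left_eq (hm : IsMultiadditive m) (hr : AnRel m 2)
    (hpadd : ∀ x y, p (x + y) = p x + p y) (hhadd : ∀ x y, h (x + y) = h x + h y)
    (hhom : ∀ v : V, v + i (p v) = dl m (h v) + h (dl m v)) (hpb : ∀ u : V, p (dl m u) = 0)
    {a z : V} (ha : dl m a = 0) (hz : dl m z = 0) :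
    p (mu2 m z a) = p (mu2 m (i (p z)) a) := by
  have hcob : mu2 m z a + mu2 m (i (p z)) a = dl m (mu2 m (h z) a) := by
    rw [← hm.mu2_add_left, add_i_p_eq_dl_h hhadd hhom hz, hr.dl_mu2, ha, hm.mu2_zero_right,
      add_zero]
  refine eq_of_sub_eq_zero ?_
  rw [ZModModule.sub_eq_add, ← hpadd, hcob, hpb]

end HomotopyRetract

theorem stmt13_general {V : Type*} [AddCommGroup V] [Module (ZMod 2) V]
    (H : Type*) [AddCommGroup H] [Module (ZMod 2) H]
    (m : ∀ k : ℕ, (Fin k → V) → V) (hm : IsAInfty m)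
    (i : H → V) (p : V → H) (h : V → V)
    (hiadd : ∀ x y, i (x + y) = i x + i y)
    (hpadd : ∀ x y, p (x + y) = p x + p y)
    (hhadd : ∀ x y, h (x + y) = h x + h y)
    (hicoc : ∀ α, dl m (i α) = 0)
    (hhom : ∀ v : V, v + i (p v) = dl m (h v) + h (dl m v))
    (hpb : ∀ u : V, p (dl m u) = 0)
    (α₁ α₂ α₃ : H)
    (h12 : p (mu2 m (i α₁) (i α₂)) = 0)
    (h23 : p (mu2 m (i α₂) (i α₃)) = 0) :
    ∀ x y : V, dl m x = mu2 m (i α₁) (i α₂) → dl m y = mu2 m (i α₂) (i α₃) →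
      ∃ β γ : H,
        p (mu3 m (i α₁) (i α₂) (i α₃)
            + mu2 m (i α₁) (h (mu2 m (i α₂) (i α₃)))
            + mu2 m (h (mu2 m (i α₁) (i α₂))) (i α₃))
          + p (mu3 m (i α₁) (i α₂) (i α₃) + mu2 m (i α₁) y + mu2 m x (i α₃))
        = p (mu2 m (i α₁) (i β)) + p (mu2 m (i γ) (i α₃)) := by
  intro x y hx hy
  obtain ⟨hma, hrel⟩ := hm
  have hr : AnRel m 2 := fun l hl _ => hrel l hl
  have dl_h_mu2 : ∀ α β, p (mu2 m (i α) (i β)) = 0 →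
      dl m (h (mu2 m (i α) (i β))) = mu2 m (i α) (i β) := fun α β hp =>
    dl_h_eq_self hiadd hhadd hhom (hr.dl_mu2_eq_zero hma (hicoc α) (hicoc β)) hp
  have hz : dl m (h (mu2 m (i α₂) (i α₃)) + y) = 0 := by
    rw [hma.dl_add, dl_h_mu2 α₂ α₃ h23, hy, ZModModule.add_self]
  have hw : dl m (h (mu2 m (i α₁) (i α₂)) + x) = 0 := by
    rw [hma.dl_add, dl_h_mu2 α₁ α₂ h12, hx, ZModModule.add_self]
  refine ⟨p (h (mu2 m (i α₂) (i α₃)) + y), p (h (mu2 m (i α₁) (i α₂)) + x), ?_⟩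
  rw [← p_mu2_right_eq hma hr hpadd hhadd hhom hpb (hicoc α₁) hz,
    ← p_mu2_left_eq hma hr hpadd hhadd hhom hpb (hicoc α₃) hw, ← hpadd, ← hpadd,
    hma.mu2_add_right, hma.mu2_add_left]
  congr 1
  rw [← sub_eq_zero, ZModModule.sub_eq_add]
  abel_nf
  simp only [two_zsmul, ZModModule.add_self]

theorem stmt13 {V : Type*} [AddCommGroup V] [Module (ZMod 2) V]
    (H : Type*) [AddCommGroup H] [Module (ZMod 2) H]
    (m : ∀ k : ℕ, (Fin k → V) → V) (hm : IsAInfty m)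
    (i : H → V) (p : V → H) (h : V → V)
    (hiadd : ∀ x y, i (x + y) = i x + i y)
    (hpadd : ∀ x y, p (x + y) = p x + p y)
    (hhadd : ∀ x y, h (x + y) = h x + h y)
    (hpi : ∀ α, p (i α) = α)
    (hicoc : ∀ α, dl m (i α) = 0)
    (hhom : ∀ v : V, v + i (p v) = dl m (h v) + h (dl m v))
    (hpb : ∀ u : V, p (dl m u) = 0)
    (α₁ α₂ α₃ : H)
    (h12 : p (mu2 m (i α₁) (i α₂)) = 0)
    (h23 : p (mu2 m (i α₂) (i α₃)) = 0) :
    ∀ x y : V, dl m x = mu2 m (i α₁) (i α₂) → dl m y = mu2 m (i α₂) (i α₃) →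
      ∃ β γ : H,
        p (mu3 m (i α₁) (i α₂) (i α₃)
            + mu2 m (i α₁) (h (mu2 m (i α₂) (i α₃)))
            + mu2 m (h (mu2 m (i α₁) (i α₂))) (i α₃))
          + p (mu3 m (i α₁) (i α₂) (i α₃) + mu2 m (i α₁) y + mu2 m x (i α₃))
        = p (mu2 m (i α₁) (i β)) + p (mu2 m (i γ) (i α₃)) :=
  stmt13_general H m hm i p h hiadd hpadd hhadd hicoc hhom hpb α₁ α₂ α₃ h12 h23
end

section
/- The reflection map τ : ⊕_{i=1}^n A^{⊗i} → ⊕_{i=1}^n A^{⊗i} defined by τ(a_1 ⊗ ⋯ ⊗ a_k) = a_k ⊗ ⋯ ⊗ a_1 is a chain isomorphism from the n-th order linearized complex (A_{(n)}, ∂_{(n)}) of a differential ∂ to the n-th order linearized complex of the reversed differential ∂̄, where ∂̄ is obtained from ∂ by reversing the order of every word in the differential of each generator. In particular, the n-th order linearized homologies of (A, ∂) and (A, ∂̄) are isomorphic. -/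
/- STATEMENT 15: The reflection map τ(a₁ ⊗ ⋯ ⊗ a_k) = a_k ⊗ ⋯ ⊗ a₁ is a chain
isomorphism from the n-th order linearized complex (A_{(n)}, ∂_{(n)}) of a DGA
differential ∂ to the n-th order linearized complex of the reversed differential ∂̄
(whose components are ∂̄_k = τ_k ∘ ∂_k).  In particular, the n-th order linearized
homologies of (A,∂) and (A,∂̄) are isomorphic.  (This corresponds to the DGA of the
Legendrian mirror.) -/


section TensorAlg

/-- The tensor algebra over `ZMod 2` on generators `q_1, …, q_N`, modelled as the
monoid algebra of the free monoid on `Fin N` (the basis is the set of words). -/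
abbrev TA (N : ℕ) := MonoidAlgebra (ZMod 2) (FreeMonoid (Fin N))

/-- The generator `q_i`. -/
noncomputable def gen {N : ℕ} (i : Fin N) : TA N := MonoidAlgebra.single (FreeMonoid.of i) 1

/-- A map is a derivation (Leibniz rule; no signs over `ZMod 2`). -/
def IsLeibniz {N : ℕ} (D : TA N →ₗ[ZMod 2] TA N) : Prop :=
  ∀ x y : TA N, D (x * y) = D x * y + x * D y

/-- The component coefficients of `D`: `coeffD D i w` is the coefficient of the word `w`
in `D q_i`; for words of length `k` these are the matrix entries of `∂_k : A → A^{⊗k}`. -/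
noncomputable def coeffD {N : ℕ} (D : TA N →ₗ[ZMod 2] TA N) (i : Fin N) (w : List (Fin N)) : ZMod 2 :=
  (D (gen i)).coeff (FreeMonoid.ofList w)

/-- The degree of a word with respect to a grading `g` of the generators. -/
def wdeg {N : ℕ} (g : Fin N → ℤ) (w : FreeMonoid (Fin N)) : ℤ :=
  ((FreeMonoid.toList w).map g).sum

/-- `D` has degree `-1`. -/
def IsDegMinusOne {N : ℕ} (g : Fin N → ℤ) (D : TA N →ₗ[ZMod 2] TA N) : Prop :=
  ∀ i : Fin N, ∀ w ∈ (D (gen i)).coeff.support, wdeg g w = g i - 1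

/-- The constant part `∂_0` of `D` vanishes. -/
def ConstTermZero {N : ℕ} (D : TA N →ₗ[ZMod 2] TA N) : Prop :=
  ∀ i : Fin N, (D (gen i)).coeff (1 : FreeMonoid (Fin N)) = 0

/-- The family of maps on the dual `A* ≅ (Fin N → ZMod 2)` adjoint to coefficients
`c`: `m_k(f₁,…,f_k)(q) = ∑_{w of length k} c q w · f₁(w₁)⋯f_k(w_k)`. -/
noncomputable def dualm {N : ℕ} (c : Fin N → List (Fin N) → ZMod 2) :
    ∀ k : ℕ, (Fin k → (Fin N → ZMod 2)) → (Fin N → ZMod 2) :=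
  fun k f q => ∑ w : Fin k → Fin N, c q (List.ofFn w) * ∏ t, f t (w t)

end TensorAlg

/-- Projection of the tensor algebra onto the span of the words of length `1, …, n`
(a choice of representatives for the quotient `A_{(n)}`). -/
noncomputable def projLen {N : ℕ} (n : ℕ) (x : TA N) : TA N :=
  MonoidAlgebra.ofCoeff (Finsupp.filter
    (fun w : FreeMonoid (Fin N) =>
      1 ≤ (FreeMonoid.toList w).length ∧ (FreeMonoid.toList w).length ≤ n) x.coeff)

/-- Reversal of words, as an equivalence of the free monoid with itself. -/
def revEquiv {N : ℕ} : FreeMonoid (Fin N) ≃ FreeMonoid (Fin N) where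
  toFun w := FreeMonoid.ofList (FreeMonoid.toList w).reverse
  invFun w := FreeMonoid.ofList (FreeMonoid.toList w).reverse
  left_inv w := by simp
  right_inv w := by simp

/-- The reflection map `τ(a₁ ⊗ ⋯ ⊗ a_k) = a_k ⊗ ⋯ ⊗ a₁` on the tensor algebra. -/
noncomputable def revA {N : ℕ} (x : TA N) : TA N := MonoidAlgebra.ofCoeff (Finsupp.equivMapDomain revEquiv x.coeff)


/-!
Reversal of words is an involutive anti-automorphism of the tensor algebra that preserves word
length, so it commutes with the truncation to words of length `1, …, n`. Conjugating `∂` by it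
gives a linear map satisfying the Leibniz rule which agrees with `∂̄` on the generators; a
derivation of a free algebra is determined by its values on the generators, so `τ ∘ ∂ = ∂̄ ∘ τ`.
-/

section Reversal

variable {N : ℕ}

@[simp]
lemma coeff_revA (x : TA N) (w : FreeMonoid (Fin N)) :
    (revA x).coeff w = x.coeff (FreeMonoid.ofList (FreeMonoid.toList w).reverse) := by
  simp [revA, Finsupp.equivMapDomain_apply, revEquiv]

@[simp]
lemma revA_revA (x : TA N) : revA (revA x) = x := by
  ext w; simp

lemma revA_single (w : FreeMonoid (Fin N)) (b : ZMod 2) :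
    revA (MonoidAlgebra.single w b)
      = MonoidAlgebra.single (FreeMonoid.ofList (FreeMonoid.toList w).reverse) b := by
  simp [revA, MonoidAlgebra.coeff_single, Finsupp.equivMapDomain_single, revEquiv]

lemma revA_gen (i : Fin N) : revA (gen i) = gen i :=
  revA_single _ _

lemma revA_projLen (n : ℕ) (x : TA N) : revA (projLen n x) = projLen n (revA x) := by
  ext w; simp [projLen, Finsupp.filter_apply]

noncomputable def revL : TA N →ₗ[ZMod 2] TA N where
  toFun := revA
  map_add' x y := by ext w; simp
  map_smul' c x := by ext w; simp

@[simp]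
lemma revL_apply (x : TA N) : revL x = revA x := rfl

lemma revA_zero : revA (0 : TA N) = 0 :=
  map_zero revL

lemma revA_add (x y : TA N) : revA (x + y) = revA x + revA y :=
  map_add revL x y

lemma revA_mul (x y : TA N) : revA (x * y) = revA y * revA x := by
  induction x using MonoidAlgebra.induction_linear with
  | zero => rw [zero_mul, revA_zero, mul_zero]
  | add a b ha hb => rw [add_mul, revA_add, ha, hb, revA_add, mul_add]
  | single v c =>
    induction y using MonoidAlgebra.induction_linear with
    | zero => rw [mul_zero, revA_zero, zero_mul]
    | add a b ha hb => rw [mul_add, revA_add, ha, hb, revA_add, add_mul]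
    | single v' c' =>
      rw [MonoidAlgebra.single_mul_single, revA_single, revA_single, revA_single,
        MonoidAlgebra.single_mul_single, mul_comm c]
      simp [FreeMonoid.toList_mul]

end Reversal

section Leibniz

variable {N : ℕ}

lemma IsLeibniz.revL_comp {D : TA N →ₗ[ZMod 2] TA N} (hD : IsLeibniz D) :
    IsLeibniz (revL ∘ₗ D ∘ₗ revL) := by
  intro x y
  simp only [LinearMap.comp_apply, revL_apply]
  rw [revA_mul, hD, revA_add, revA_mul, revA_mul, revA_revA, revA_revA, add_comm]

lemma IsLeibniz.map_one {D : TA N →ₗ[ZMod 2] TA N} (hD : IsLeibniz D) : D 1 = 0 := by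
  simpa using hD 1 1

lemma single_of_mul (i : Fin N) (w : FreeMonoid (Fin N)) :
    (MonoidAlgebra.single (FreeMonoid.of i * w) 1 : TA N) = gen i * MonoidAlgebra.single w 1 := by
  rw [gen, MonoidAlgebra.single_mul_single, mul_one]

lemma IsLeibniz.ext {D D' : TA N →ₗ[ZMod 2] TA N} (hD : IsLeibniz D) (hD' : IsLeibniz D')
    (h : ∀ i, D (gen i) = D' (gen i)) : D = D' := by
  have hword (w : FreeMonoid (Fin N)) :
      D (MonoidAlgebra.single w 1) = D' (MonoidAlgebra.single w 1) := by
    induction w using FreeMonoid.inductionOn' with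
    | one => rw [← MonoidAlgebra.one_def, hD.map_one, hD'.map_one]
    | of_mul i w ih => rw [single_of_mul, hD, hD', h, ih]
  refine MonoidAlgebra.lhom_ext' fun w => LinearMap.ext fun c => ?_
  simp only [LinearMap.comp_apply, MonoidAlgebra.lsingle_apply]
  rw [← mul_one c, ← MonoidAlgebra.smul_single', map_smul, map_smul, hword]

lemma apply_gen_eq_revA_of_coeffD {D Dbar : TA N →ₗ[ZMod 2] TA N}
    (hrev : ∀ (i : Fin N) (w : List (Fin N)), coeffD Dbar i w = coeffD D i w.reverse)
    (i : Fin N) : Dbar (gen i) = revA (D (gen i)) := by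
  ext w
  simpa [coeffD] using hrev i (FreeMonoid.toList w)

end Leibniz

theorem stmt15_general {N : ℕ} (n : ℕ) (D Dbar : TA N →ₗ[ZMod 2] TA N)
    (hleib : IsLeibniz D)
    (hleib' : ∀ x y : TA N, Dbar (x * y) = x * Dbar y + Dbar x * y)
    -- ∂̄ is the reversed differential: its components are τ_k ∘ ∂_k
    (hrev : ∀ (i : Fin N) (w : List (Fin N)), coeffD Dbar i w = coeffD D i w.reverse) :
    -- τ is a chain map between the n-th order linearized complexes …
    (∀ x : TA N, revA (projLen n (D (projLen n x)))
        = projLen n (Dbar (projLen n (revA x))))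
    -- … and an involution, hence a chain isomorphism; in particular the n-th order
    -- linearized homologies of (A,∂) and (A,∂̄) are isomorphic
    ∧ (∀ x : TA N, revA (revA x) = x) := by
  have hDbar : Dbar = revL ∘ₗ D ∘ₗ revL :=
    IsLeibniz.ext (fun x y => (hleib' x y).trans (add_comm _ _)) hleib.revL_comp fun i => by
      simp [revA_gen, apply_gen_eq_revA_of_coeffD hrev i]
  refine ⟨fun x => ?_, revA_revA⟩
  rw [hDbar]
  simp [revA_projLen]

theorem stmt15 {N : ℕ} (n : ℕ) (D Dbar : TA N →ₗ[ZMod 2] TA N)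
    (hleib : IsLeibniz D) (hD2 : ∀ x, D (D x) = 0) (h0 : ConstTermZero D)
    (hleib' : ∀ x y : TA N, Dbar (x * y) = x * Dbar y + Dbar x * y)
    (hD2' : ∀ x, Dbar (Dbar x) = 0) (h0' : ConstTermZero Dbar)
    -- ∂̄ is the reversed differential: its components are τ_k ∘ ∂_k
    (hrev : ∀ (i : Fin N) (w : List (Fin N)), coeffD Dbar i w = coeffD D i w.reverse) :
    -- τ is a chain map between the n-th order linearized complexes …
    (∀ x : TA N, revA (projLen n (D (projLen n x)))
        = projLen n (Dbar (projLen n (revA x))))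
    -- … and an involution, hence a chain isomorphism; in particular the n-th order
    -- linearized homologies of (A,∂) and (A,∂̄) are isomorphic
    ∧ (∀ x : TA N, revA (revA x) = x) :=
  stmt15_general n D Dbar hleib hleib' hrev
end

section
/- In the Chekanov-Eliashberg DGA over Z/2 of the Legendrian right-handed trefoil with generators a_1, a_2 (degree 1) and b_1, b_2, b_3 (degree 0), differential ∂a_1 = 1 + b_1 + b_3 + b_1b_2b_3, ∂a_2 = 1 + b_1 + b_3 + b_3b_2b_1, ∂b_i = 0, and augmentation ε with ε(b_3) = 1 and ε = 0 on all other generators: the linearized cohomology satisfies LCH¹_ε ≅ Z/2 generated by a = [a_1] = [a_2], LCH⁰_ε ≅ (Z/2)² generated by b = [b_2] and c = [b_1 + b_3], the cup product satisfies b ∪ c = a = c ∪ b, and all other products of the generators b, c vanish. -/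
/- STATEMENT 19: For the Chekanov–Eliashberg DGA of the Legendrian right-handed
trefoil, with generators a₁, a₂ (degree 1, basis indices 0, 1) and b₁, b₂, b₃
(degree 0, indices 2, 3, 4), the augmentation ε(b₃) = 1 yields the linearized
A_∞-structure on A* dual to the augmented differential
  ∂^ε a₁ = b₁ + b₃ + b₁b₂ + b₁b₂b₃,  ∂^ε a₂ = b₁ + b₃ + b₂b₁ + b₃b₂b₁,  ∂^ε bᵢ = 0.
Claims: LCH¹_ε ≅ Z/2 generated by a = [a₁] = [a₂]; LCH⁰_ε ≅ (Z/2)² generated by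
b = [b₂] and c = [b₁+b₃]; the cup product satisfies b ∪ c = a = c ∪ b; and all other
products of the generators b, c vanish. -/

open Finset

/-- Coefficients of the augmented differential of the Legendrian trefoil
(indices: 0 = a₁, 1 = a₂, 2 = b₁, 3 = b₂, 4 = b₃). -/
def cTref : Fin 5 → List (Fin 5) → ZMod 2 := fun q w =>
  if q = 0 ∧ (w = [2] ∨ w = [4] ∨ w = [2, 3] ∨ w = [2, 3, 4]) then 1
  else if q = 1 ∧ (w = [2] ∨ w = [4] ∨ w = [3, 2] ∨ w = [4, 3, 2]) then 1
  else 0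

/-- The dual A_∞-structure maps `m_k` on `A* ≅ (Fin 5 → ZMod 2)`. -/
def mTref : ∀ k : ℕ, (Fin k → (Fin 5 → ZMod 2)) → (Fin 5 → ZMod 2) :=
  fun k f q => ∑ w : Fin k → Fin 5, cTref q (List.ofFn w) * ∏ t, f t (w t)

/-- Degree-1 cochains: the span of the duals of a₁, a₂. -/
def InDeg1 (f : Fin 5 → ZMod 2) : Prop := f 2 = 0 ∧ f 3 = 0 ∧ f 4 = 0

/-- Degree-0 cochains: the span of the duals of b₁, b₂, b₃. -/
def InDeg0 (f : Fin 5 → ZMod 2) : Prop := f 0 = 0 ∧ f 1 = 0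

/-! Every term of the augmented differential sends some `aᵢ` to a word in the `bⱼ`. Dually, every
`m_k` takes values in the span of the `aᵢ` and vanishes as soon as one of its inputs lies in that
span, so all compositions `m ∘ m` vanish and the A_∞ relations hold trivially. The cohomological
claims are then read off from `δf = (f b₁ + f b₃)(a₁ + a₂)` and
`m₂(f, g) = f(b₁) g(b₂) a₁ + f(b₂) g(b₁) a₂`. -/

section DualOps

variable {ι R : Type*} [Fintype ι] [CommRing R]

def dualOps (c : ι → List ι → R) : ∀ k : ℕ, (Fin k → ι → R) → ι → R :=
  fun k f q => ∑ w : Fin k → ι, c q (List.ofFn w) * ∏ t, f t (w t)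

theorem isMultiadditive_dualOps (c : ι → List ι → R) : IsMultiadditive (dualOps c) := by
  intro k f s x y
  funext q
  simp only [dualOps, Pi.add_apply, ← Finset.sum_add_distrib, ← mul_add]
  refine Finset.sum_congr rfl fun w _ => congrArg _ ?_
  simp only [Function.apply_update (fun t (h : ι → R) => h (w t)),
    Finset.prod_update_of_mem (Finset.mem_univ s), Pi.add_apply, add_mul]

variable {c : ι → List ι → R} {S : Set ι}

theorem dualOps_apply_eq_zero (hout : ∀ q w, c q w ≠ 0 → q ∈ S) {k : ℕ} (f : Fin k → ι → R)
    {q : ι} (hq : q ∉ S) : dualOps c k f q = 0 :=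
  Finset.sum_eq_zero fun w _ => by
    rw [not_ne_iff.mp (mt (hout q (List.ofFn w)) hq), zero_mul]

theorem dualOps_eq_zero (hin : ∀ q w, c q w ≠ 0 → ∀ x ∈ w, x ∉ S) {k : ℕ}
    (f : Fin k → ι → R) (s : Fin k) (hs : ∀ x ∉ S, f s x = 0) : dualOps c k f = 0 := by
  funext q
  refine Finset.sum_eq_zero fun w _ => ?_
  by_cases hc : c q (List.ofFn w) = 0
  · rw [hc, zero_mul]
  · have hws : w s ∉ S := hin q _ hc (w s) (List.mem_ofFn.mpr ⟨s, rfl⟩)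
    rw [Finset.prod_eq_zero (Finset.mem_univ s) (hs _ hws), mul_zero]

theorem insComp_dualOps_eq_zero (hout : ∀ q w, c q w ≠ 0 → q ∈ S)
    (hin : ∀ q w, c q w ≠ 0 → ∀ x ∈ w, x ∉ S) (i j k : ℕ) (v : ℕ → ι → R) :
    insComp (dualOps c) (dualOps c) i j k v = 0 :=
  dualOps_eq_zero hin _ ⟨i, by omega⟩ fun _ hx => by
    simpa using dualOps_apply_eq_zero hout _ hx

theorem dl_dualOps_apply (c : ι → List ι → R) (f : ι → R) (q : ι) :
    dl (dualOps c) f q = ∑ x, c q [x] * f x :=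
  Fintype.sum_equiv (Equiv.funUnique (Fin 1) ι) _ _ fun w => by simp [List.ofFn_succ]

theorem mu2_dualOps_apply (c : ι → List ι → R) (f g : ι → R) (q : ι) :
    mu2 (dualOps c) f g q = ∑ x, ∑ y, c q [x, y] * (f x * g y) := by
  rw [← Fintype.sum_prod_type']
  exact Fintype.sum_equiv (piFinTwoEquiv fun _ => ι) _ _ fun w => by
    simp [List.ofFn_succ, Fin.prod_univ_two]

end DualOps

theorem aInftyRel_of_insComp_eq_zero {V : Type*} [AddCommGroup V] [Module (ZMod 2) V]
    {m : ∀ k : ℕ, (Fin k → V) → V} (h : ∀ i j k v, insComp m m i j k v = 0) : AInftyRel m :=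
  fun _ _ v => Finset.sum_eq_zero fun i _ => Finset.sum_eq_zero fun j _ =>
    Finset.sum_eq_zero fun k _ => by simp [h]

theorem mTref_eq_dualOps : mTref = dualOps cTref := rfl

theorem cTref_ne_zero {q : Fin 5} {w : List (Fin 5)} (h : cTref q w ≠ 0) :
    q ∈ ({0, 1} : Set (Fin 5)) ∧ ∀ x ∈ w, x ∉ ({0, 1} : Set (Fin 5)) := by
  unfold cTref at h
  split_ifs at h with h0 h1
  · rcases h0 with ⟨rfl, rfl | rfl | rfl | rfl⟩ <;> simp
  · rcases h1 with ⟨rfl, rfl | rfl | rfl | rfl⟩ <;> simp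
  · exact absurd rfl h

theorem isAInfty_mTref : IsAInfty mTref :=
  ⟨isMultiadditive_dualOps cTref, aInftyRel_of_insComp_eq_zero <|
    insComp_dualOps_eq_zero (fun _ _ h => (cTref_ne_zero h).1) fun _ _ h => (cTref_ne_zero h).2⟩

theorem dl_mTref (f : Fin 5 → ZMod 2) :
    dl mTref f = (f 2 + f 4) • (Pi.single 0 1 + Pi.single 1 1) := by
  funext q
  rw [mTref_eq_dualOps, dl_dualOps_apply, Fin.sum_univ_five]
  fin_cases q <;> simp [cTref]

theorem mu2_mTref (f g : Fin 5 → ZMod 2) :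
    mu2 mTref f g = (f 2 * g 3) • Pi.single 0 1 + (f 3 * g 2) • Pi.single 1 1 := by
  funext q
  simp only [mTref_eq_dualOps, mu2_dualOps_apply, Fin.sum_univ_five]
  fin_cases q <;> simp [cTref]

theorem dl_mTref_eq_zero_iff (f : Fin 5 → ZMod 2) : dl mTref f = 0 ↔ f 2 = f 4 := by
  rw [dl_mTref, smul_eq_zero, CharTwo.add_eq_zero, or_iff_left]
  intro h
  simpa using congrFun h 0

theorem dl_mTref_ne_single_zero (u : Fin 5 → ZMod 2) : dl mTref u ≠ Pi.single 0 1 := by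
  intro h
  have h0 := congrFun h 0
  have h1 := congrFun h 1
  simp [dl_mTref] at h0 h1
  exact zero_ne_one (h1.symm.trans h0)

theorem InDeg0.smul {f : Fin 5 → ZMod 2} (hf : InDeg0 f) (s : ZMod 2) : InDeg0 (s • f) := by
  simp [InDeg0, hf.1, hf.2]

theorem inDeg0_single_two : InDeg0 (Pi.single 2 1) := by
  simp [InDeg0]

theorem deg0_eq_smul_add_smul_iff {f : Fin 5 → ZMod 2} (hf : InDeg0 f) (h24 : f 2 = f 4)
    (s t : ZMod 2) :
    f = s • Pi.single 3 1 + t • (Pi.single 2 1 + Pi.single 4 1) ↔ s = f 3 ∧ t = f 2 := by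
  constructor
  · rintro rfl
    simp
  · rintro ⟨rfl, rfl⟩
    funext q
    fin_cases q <;> simp [hf.1, hf.2, h24]

theorem stmt19 :
    -- names for the relevant cochains
    let a₁ : Fin 5 → ZMod 2 := Pi.single 0 1
    let a₂ : Fin 5 → ZMod 2 := Pi.single 1 1
    let b : Fin 5 → ZMod 2 := Pi.single 3 1            -- b = [b₂]
    let c : Fin 5 → ZMod 2 := Pi.single 2 1 + Pi.single 4 1  -- c = [b₁ + b₃]
    -- `mTref` is an A_∞-structure and b, c, a₁, a₂ are cocycles of the right degrees
    IsAInfty mTref ∧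
    -- LCH⁰: the degree-0 cocycles are exactly those with equal b₁- and b₃-coefficients,
    (∀ f, InDeg0 f → (dl mTref f = 0 ↔ f 2 = f 4)) ∧
    -- there are no degree-0 coboundaries, and LCH⁰ ≅ (Z/2)² generated by b and c:
    (∀ f, InDeg0 f → dl mTref f = 0 →
      ∃! st : ZMod 2 × ZMod 2, f = st.1 • b + st.2 • c) ∧
    -- LCH¹: every degree-1 cochain is a cocycle,
    (∀ f, InDeg1 f → dl mTref f = 0) ∧
    -- [a₁] = [a₂] (call this common class a), LCH¹ ≅ Z/2 generated by a:
    (∃ u, InDeg0 u ∧ dl mTref u = a₁ + a₂) ∧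
    (∀ f, InDeg1 f → ∃ s : ZMod 2, ∃ u, InDeg0 u ∧ f = s • a₁ + dl mTref u) ∧
    (¬ ∃ u, InDeg0 u ∧ dl mTref u = a₁) ∧
    -- cup products: b ∪ c = a = c ∪ b (equalities of cohomology classes) …
    (∃ u, InDeg0 u ∧ dl mTref u = mu2 mTref b c + a₁) ∧
    (∃ u, InDeg0 u ∧ dl mTref u = mu2 mTref c b + a₁) ∧
    -- … and all other products of the generators b, c vanish in cohomology
    (∃ u, InDeg0 u ∧ dl mTref u = mu2 mTref b b) ∧
    (∃ u, InDeg0 u ∧ dl mTref u = mu2 mTref c c) := by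
  intro a₁ a₂ b c
  have hδ : dl mTref (Pi.single 2 1) = a₁ + a₂ := by simp [dl_mTref, a₁, a₂]
  refine ⟨isAInfty_mTref, fun f _ => dl_mTref_eq_zero_iff f, ?_, ?_, ⟨_, inDeg0_single_two, hδ⟩,
    ?_, fun ⟨u, _, hu⟩ => dl_mTref_ne_single_zero u hu, ⟨_, inDeg0_single_two, ?_⟩,
    ⟨0, ⟨rfl, rfl⟩, ?_⟩, ⟨0, ⟨rfl, rfl⟩, ?_⟩, ⟨0, ⟨rfl, rfl⟩, ?_⟩⟩
  · intro f hf hδf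
    have h24 := (dl_mTref_eq_zero_iff f).mp hδf
    refine ⟨(f 3, f 2), (deg0_eq_smul_add_smul_iff hf h24 _ _).mpr ⟨rfl, rfl⟩, fun st hst => ?_⟩
    obtain ⟨h1, h2⟩ := (deg0_eq_smul_add_smul_iff hf h24 _ _).mp hst
    exact Prod.ext h1 h2
  · intro f ⟨h2, _, h4⟩
    simp [dl_mTref, h2, h4]
  · -- f = f₀ a₁ + f₁ a₂ = (f₀ + f₁) a₁ + f₁ δb₁
    intro f ⟨h2, h3, h4⟩
    refine ⟨f 0 + f 1, f 1 • Pi.single 2 1, inDeg0_single_two.smul _, ?_⟩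
    funext q
    fin_cases q <;> simp [dl_mTref, a₁, h2, h3, h4, add_assoc, CharTwo.add_self_eq_zero]
  all_goals
    funext q
    fin_cases q <;> simp [dl_mTref, mu2_mTref, a₁, b, c, CharTwo.add_self_eq_zero]
end
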